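/- For all u : V → ℝ and all h ∈ ℝ, E(u + h·1_V) = E(u) + h·(Σ_{i∈V} Θ_i − π·|T|), where 1_V is the constant function 1. Consequently, E(u + h·1_V) = E(u) holds for all u and all h if and only if Σ_{i∈V} Θ_i = π·|T|. -/

import Mathlib

open Real Finset

/-- Milnor's Lobachevsky function. -/
noncomputable def Lob (x : ℝ) : ℝ := -∫ t in (0:ℝ)..x, Real.log |2 * Real.sin t|

/-- Angle opposite the side of length `a` in a euclidean triangle with side
lengths `a`, `b`, `c`, given by the arccos formula (which, since `Real.arccos`
clamps, also implements the broken-triangle convention). -/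
noncomputable def eang (a b c : ℝ) : ℝ := Real.arccos ((b^2 + c^2 - a^2) / (2*b*c))

/-- The extended triangle function `f`. -/
noncomputable def fTri (p : ℝ × ℝ × ℝ) : ℝ :=
  eang (Real.exp p.1) (Real.exp p.2.1) (Real.exp p.2.2) * p.1 +
  eang (Real.exp p.2.1) (Real.exp p.2.2) (Real.exp p.1) * p.2.1 +
  eang (Real.exp p.2.2) (Real.exp p.1) (Real.exp p.2.1) * p.2.2 +
  Lob (eang (Real.exp p.1) (Real.exp p.2.1) (Real.exp p.2.2)) +
  Lob (eang (Real.exp p.2.1) (Real.exp p.2.2) (Real.exp p.1)) +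
  Lob (eang (Real.exp p.2.2) (Real.exp p.1) (Real.exp p.2.1))

/-- The modified logarithmic lengths `λ̃_{ij} = λ_{ij} + u_i + u_j`. -/
def lamT {V : Type*} (lam : V → V → ℝ) (u : V → ℝ) (i j : V) : ℝ :=
  lam i j + u i + u j

/-- The modified lengths `ℓ̃_{ij} = e^{λ̃_{ij}/2}`. -/
noncomputable def ellT {V : Type*} (lam : V → V → ℝ) (u : V → ℝ) (i j : V) : ℝ :=
  Real.exp (lamT lam u i j / 2)

/-- The angle at the vertex `i` in the euclidean triangle `ijk` with side
lengths `ℓ̃_{ij}, ℓ̃_{jk}, ℓ̃_{ki}` (extended by the broken-triangle convention). -/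
noncomputable def angAt {V : Type*} (lam : V → V → ℝ) (u : V → ℝ) (i j k : V) : ℝ :=
  eang (ellT lam u j k) (ellT lam u k i) (ellT lam u i j)

/-- The function `E_{T,Θ,λ}(u)` of the first variational principle. -/
noncomputable def Efun {V T : Type*} [Fintype V] [Fintype T]
    (tv : T → V × V × V) (lam : V → V → ℝ) (Θ : V → ℝ) (u : V → ℝ) : ℝ :=
  (∑ t : T,
    (2 * fTri (lamT lam u (tv t).1 (tv t).2.1 / 2,
               lamT lam u (tv t).2.1 (tv t).2.2 / 2,
               lamT lam u (tv t).2.2 (tv t).1 / 2)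
      - (π/2) * (lamT lam u (tv t).1 (tv t).2.1
               + lamT lam u (tv t).2.1 (tv t).2.2
               + lamT lam u (tv t).2.2 (tv t).1)))
  + ∑ i : V, Θ i * u i

/-! Multiplying all three side lengths of a triangle by `e^h` does not change its angles, and
the three angles of a (possibly degenerate) triangle sum to `π`; hence
`f(x + h, y + h, z + h) = f(x, y, z) + π h`. Adding `h` to `u` adds `2h` to every `λ̃`, so each
triangle contributes `2πh - 3πh = -πh`, while the `Θ`-term grows by `h Σᵢ Θᵢ`. -/

namespace Real

/-- `hxyz` and `hsq` say that `cos (arccos x + arccos y) = -z`, and `hxy` keeps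
`arccos x + arccos y` in `[0, π]`, where `cos` is injective. -/
theorem arccos_add_arccos_add_arccos_eq_pi {x y z : ℝ} (hx₁ : -1 ≤ x) (hx₂ : x ≤ 1)
    (hy₁ : -1 ≤ y) (hy₂ : y ≤ 1) (hz₁ : -1 ≤ z) (hz₂ : z ≤ 1) (hxy : 0 ≤ x + y)
    (hxyz : 0 ≤ x * y + z) (hsq : (1 - x ^ 2) * (1 - y ^ 2) = (x * y + z) ^ 2) :
    arccos x + arccos y + arccos z = π := by
  have hsqrt : √(1 - x ^ 2) * √(1 - y ^ 2) = x * y + z := by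
    rw [← sqrt_mul (by nlinarith), hsq, sqrt_sq hxyz]
  have hcos : cos (arccos x + arccos y) = cos (π - arccos z) := by
    rw [cos_add, cos_pi_sub, cos_arccos hx₁ hx₂, cos_arccos hy₁ hy₂, cos_arccos hz₁ hz₂,
      sin_arccos, sin_arccos, hsqrt]
    ring
  have hle : arccos x + arccos y ≤ π := by
    have : arccos x ≤ arccos (-y) := arccos_le_arccos (by linarith)
    rw [arccos_neg] at this
    linarith
  have heq : arccos x + arccos y = π - arccos z :=
    injOn_cos ⟨add_nonneg (arccos_nonneg x) (arccos_nonneg y), hle⟩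
      ⟨by linarith [arccos_le_pi z], by linarith [arccos_nonneg z]⟩ hcos
  linarith

end Real

section eang

variable {a b c : ℝ}

theorem eang_comm (a b c : ℝ) : eang a b c = eang a c b := by
  unfold eang
  ring_nf

theorem eang_const_mul (a : ℝ) (hb : 0 < b) (hc : 0 < c) {k : ℝ} (hk : 0 < k) :
    eang (k * a) (k * b) (k * c) = eang a b c := by
  unfold eang
  congr 1
  rw [div_eq_div_iff (by positivity) (by positivity)]
  ring

theorem eang_eq_pi_of_add_le (hb : 0 < b) (hc : 0 < c) (h : b + c ≤ a) : eang a b c = π := by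
  rw [eang, Real.arccos_eq_pi, div_le_iff₀ (by positivity)]
  nlinarith

theorem eang_eq_zero_of_add_le (ha : 0 < a) (hb : 0 < b) (hc : 0 < c) (h : a + c ≤ b) :
    eang a b c = 0 := by
  rw [eang, Real.arccos_eq_zero, le_div_iff₀ (by positivity)]
  nlinarith [mul_nonneg (sub_nonneg.2 h) (by linarith : 0 ≤ b - c + a)]

theorem eang_add_eang_add_eang_of_add_le (ha : 0 < a) (hb : 0 < b) (hc : 0 < c)
    (h : b + c ≤ a) : eang a b c + eang b c a + eang c a b = π := by
  rw [eang_eq_pi_of_add_le hb hc h, eang_comm b, eang_eq_zero_of_add_le hb ha hc (by linarith),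
    eang_eq_zero_of_add_le hc ha hb (by linarith)]
  ring

theorem cos_law_ratio_mem_Icc (hb : 0 < b) (hc : 0 < c) (h₁ : a ≤ b + c) (h₂ : b ≤ a + c)
    (h₃ : c ≤ a + b) : (b ^ 2 + c ^ 2 - a ^ 2) / (2 * b * c) ∈ Set.Icc (-1) 1 := by
  have hbc : 0 < 2 * b * c := by positivity
  constructor
  · rw [le_div_iff₀ hbc]
    nlinarith [mul_nonneg (sub_nonneg.2 h₁) (by linarith : 0 ≤ b + c + a)]
  · rw [div_le_iff₀ hbc]
    nlinarith [mul_nonneg (by linarith : 0 ≤ a - b + c) (by linarith : 0 ≤ a + b - c)]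

theorem eang_add_eang_add_eang_of_lt (ha : 0 < a) (hb : 0 < b) (hc : 0 < c) (h₁ : a < b + c)
    (h₂ : b < c + a) (h₃ : c < a + b) : eang a b c + eang b c a + eang c a b = π := by
  obtain ⟨hx₁, hx₂⟩ := cos_law_ratio_mem_Icc (a := a) hb hc h₁.le (by linarith) (by linarith)
  obtain ⟨hy₁, hy₂⟩ := cos_law_ratio_mem_Icc (a := b) hc ha h₂.le (by linarith) (by linarith)
  obtain ⟨hz₁, hz₂⟩ := cos_law_ratio_mem_Icc (a := c) ha hb h₃.le (by linarith) (by linarith)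
  refine Real.arccos_add_arccos_add_arccos_eq_pi hx₁ hx₂ hy₁ hy₂ hz₁ hz₂ ?_ ?_ ?_
  · rw [div_add_div _ _ (by positivity) (by positivity)]
    apply div_nonneg _ (by positivity)
    have : 0 < (a + b) * (c - a + b) * (c + a - b) :=
      mul_pos (mul_pos (by linarith) (by linarith)) (by linarith)
    nlinarith [mul_pos hc this]
  · have e : (b ^ 2 + c ^ 2 - a ^ 2) / (2 * b * c) * ((c ^ 2 + a ^ 2 - b ^ 2) / (2 * c * a))
        + (a ^ 2 + b ^ 2 - c ^ 2) / (2 * a * b)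
        = (b + c - a) * (c + a - b) * (a + b - c) * (a + b + c) / (4 * a * b * c ^ 2) := by
      field_simp
      ring
    rw [e]
    apply div_nonneg _ (by positivity)
    have : 0 < (b + c - a) * (c + a - b) * (a + b - c) :=
      mul_pos (mul_pos (by linarith) (by linarith)) (by linarith)
    exact mul_nonneg this.le (by linarith)
  · field_simp
    ring

theorem eang_add_eang_add_eang (ha : 0 < a) (hb : 0 < b) (hc : 0 < c) :
    eang a b c + eang b c a + eang c a b = π := by
  rcases le_or_gt (b + c) a with hA | hA
  · exact eang_add_eang_add_eang_of_add_le ha hb hc hA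
  rcases le_or_gt (c + a) b with hB | hB
  · linarith [eang_add_eang_add_eang_of_add_le hb hc ha hB]
  rcases le_or_gt (a + b) c with hC | hC
  · linarith [eang_add_eang_add_eang_of_add_le hc ha hb hC]
  exact eang_add_eang_add_eang_of_lt ha hb hc hA hB hC

end eang

theorem fTri_add_const (x y z h : ℝ) : fTri (x + h, y + h, z + h) = fTri (x, y, z) + h * π := by
  have hscale (p q r : ℝ) : eang (exp (p + h)) (exp (q + h)) (exp (r + h))
      = eang (exp p) (exp q) (exp r) := by
    simp only [exp_add, mul_comm _ (exp h)]
    exact eang_const_mul _ (exp_pos q) (exp_pos r) (exp_pos h)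
  have hsum := eang_add_eang_add_eang (exp_pos x) (exp_pos y) (exp_pos z)
  simp only [fTri, hscale]
  linear_combination h * hsum

theorem lamT_add_const {V : Type*} (lam : V → V → ℝ) (u : V → ℝ) (h : ℝ) (i j : V) :
    lamT lam (u + fun _ => h) i j = lamT lam u i j + 2 * h := by
  simp only [lamT, Pi.add_apply]
  ring

theorem Efun_add_const {V T : Type*} [Fintype V] [Fintype T] (tv : T → V × V × V)
    (lam : V → V → ℝ) (Θ : V → ℝ) (u : V → ℝ) (h : ℝ) :
    Efun tv lam Θ (u + fun _ => h)
      = Efun tv lam Θ u + h * ((∑ i : V, Θ i) - π * (Fintype.card T : ℝ)) := by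
  have hhalf (w : ℝ) : (w + 2 * h) / 2 = w / 2 + h := by ring
  simp only [Efun, lamT_add_const, hhalf, fTri_add_const, Pi.add_apply]
  simp only [mul_add, sum_add_distrib, sum_sub_distrib, ← sum_mul, sum_const, card_univ,
    nsmul_eq_mul]
  ring

theorem Efun_scale_invariance {V T : Type*} [Fintype V] [Fintype T]
    (tv : T → V × V × V)
    (lam : V → V → ℝ) (Θ : V → ℝ) :
    (∀ (u : V → ℝ) (h : ℝ),
      Efun tv lam Θ (u + fun _ => h)
        = Efun tv lam Θ u + h * ((∑ i : V, Θ i) - π * (Fintype.card T : ℝ))) ∧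
    ((∀ (u : V → ℝ) (h : ℝ), Efun tv lam Θ (u + fun _ => h) = Efun tv lam Θ u) ↔
      (∑ i : V, Θ i) = π * (Fintype.card T : ℝ)) := by
  refine ⟨Efun_add_const tv lam Θ, fun hinv => ?_, fun hΘ u h => ?_⟩
  · have h₁ := Efun_add_const tv lam Θ 0 1
    rw [hinv] at h₁
    linarith
  · rw [Efun_add_const, hΘ, sub_self, mul_zero, add_zero]
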